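/- arXiv:2008.12288 — 7 statements merged into one kernel-verified Lean document; each statement's English description precedes it below -/
import Mathlib

section
/- Let P be a positive semidefinite real d×d matrix satisfying the Lyapunov equation A P + P Aᵀ + N P Nᵀ + B Bᵀ = 0 for matrices A, N ∈ ℝ^{d×d} and B ∈ ℝ^{d×n}. Then the kernel of P is invariant under Aᵀ and Nᵀ, and the columns of B lie in the orthogonal complement of ker(P); equivalently, Nᵀ(ker P) ⊆ ker P, Aᵀ(ker P) ⊆ ker P, and ran(B) ⊆ (ker P)^⊥. -/
/-!
Evaluate the Lyapunov equation as a quadratic form at `x ∈ ker P`. The drift terms `A P + P Aᵀ`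
vanish there, leaving `(Nᵀx)ᵀ P (Nᵀx) + |Bᵀx|² = 0`, a sum of two nonnegative terms; hence
`P Nᵀx = 0` and `Bᵀx = 0`. Applying the equation to `x` itself then leaves only `P Aᵀx = 0`.
-/

open Matrix

namespace Matrix

section CommSemiring

variable {m k R : Type*} [Fintype m] [Fintype k] [CommSemiring R]

theorem dotProduct_mul_mul_transpose_mulVec (M : Matrix m k R) (Q : Matrix k k R) (x : m → R) :
    x ⬝ᵥ (M * Q * Mᵀ) *ᵥ x = (Mᵀ *ᵥ x) ⬝ᵥ Q *ᵥ (Mᵀ *ᵥ x) := by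
  rw [← mulVec_mulVec, ← mulVec_mulVec, dotProduct_mulVec, ← mulVec_transpose]

theorem dotProduct_mul_transpose_mulVec (M : Matrix m k R) (x : m → R) :
    x ⬝ᵥ (M * Mᵀ) *ᵥ x = (Mᵀ *ᵥ x) ⬝ᵥ (Mᵀ *ᵥ x) := by
  rw [← mulVec_mulVec, dotProduct_mulVec, ← mulVec_transpose]

theorem dotProduct_mul_add_mul_transpose_mulVec_eq_zero {A P : Matrix m m R} (hP : Pᵀ = P)
    {x : m → R} (hx : P *ᵥ x = 0) : x ⬝ᵥ (A * P + P * Aᵀ) *ᵥ x = 0 := by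
  rw [add_mulVec, ← mulVec_mulVec, ← mulVec_mulVec, hx, mulVec_zero, zero_add,
    dotProduct_mulVec, ← mulVec_transpose, hP, hx, zero_dotProduct]

end CommSemiring

namespace PosSemidef

variable {m k : Type*} [Fintype m] [Fintype k] {A N P : Matrix m m ℝ} {B : Matrix m k ℝ}

theorem mulVec_transpose_eq_zero_of_lyapunov (hP : P.PosSemidef)
    (hLyap : A * P + P * Aᵀ + N * P * Nᵀ + B * Bᵀ = 0) {x : m → ℝ} (hx : P *ᵥ x = 0) :
    P *ᵥ (Nᵀ *ᵥ x) = 0 ∧ Bᵀ *ᵥ x = 0 := by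
  have hquad : (Nᵀ *ᵥ x) ⬝ᵥ P *ᵥ (Nᵀ *ᵥ x) + (Bᵀ *ᵥ x) ⬝ᵥ (Bᵀ *ᵥ x) = 0 := by
    have hdrift : x ⬝ᵥ (A * P + P * Aᵀ) *ᵥ x = 0 :=
      dotProduct_mul_add_mul_transpose_mulVec_eq_zero hP.1 hx
    have h := congrArg (fun M => x ⬝ᵥ M *ᵥ x) hLyap
    rwa [add_mulVec, add_mulVec (A * P + P * Aᵀ), dotProduct_add, dotProduct_add, hdrift,
      zero_add, dotProduct_mul_mul_transpose_mulVec, dotProduct_mul_transpose_mulVec,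
      zero_mulVec, dotProduct_zero] at h
  have hnoise_nonneg : 0 ≤ (Nᵀ *ᵥ x) ⬝ᵥ P *ᵥ (Nᵀ *ᵥ x) :=
    hP.dotProduct_mulVec_nonneg (Nᵀ *ᵥ x)
  obtain ⟨hnoise, hinput⟩ :=
    (add_eq_zero_iff_of_nonneg hnoise_nonneg (dotProduct_self_star_nonneg _)).mp hquad
  exact ⟨(hP.dotProduct_mulVec_zero_iff _).mp hnoise, dotProduct_self_eq_zero.mp hinput⟩

theorem mulVec_transpose_drift_eq_zero_of_lyapunov (hP : P.PosSemidef)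
    (hLyap : A * P + P * Aᵀ + N * P * Nᵀ + B * Bᵀ = 0) {x : m → ℝ} (hx : P *ᵥ x = 0) :
    P *ᵥ (Aᵀ *ᵥ x) = 0 := by
  obtain ⟨hnoise, hinput⟩ := hP.mulVec_transpose_eq_zero_of_lyapunov hLyap hx
  have h := congrArg (· *ᵥ x) hLyap
  simpa only [add_mulVec, ← mulVec_mulVec, hx, hnoise, hinput, mulVec_zero, zero_mulVec,
    zero_add, add_zero] using h

end PosSemidef

end Matrix

/-- If a positive semidefinite `P` satisfies the Lyapunov equation
`A P + P Aᵀ + N P Nᵀ + B Bᵀ = 0`, then `ker P` is invariant under `Aᵀ` and `Nᵀ`,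
and the columns of `B` lie in `(ker P)ᗮ`. -/
theorem kernel_invariance_reachability_lyapunov
    {d n : ℕ} (A N P : Matrix (Fin d) (Fin d) ℝ) (B : Matrix (Fin d) (Fin n) ℝ)
    (hP : P.PosSemidef)
    (hLyap : A * P + P * Aᵀ + N * P * Nᵀ + B * Bᵀ = 0) :
    (∀ x : Fin d → ℝ, P.mulVec x = 0 → P.mulVec (Nᵀ.mulVec x) = 0) ∧
    (∀ x : Fin d → ℝ, P.mulVec x = 0 → P.mulVec (Aᵀ.mulVec x) = 0) ∧
    (∀ (x : Fin d → ℝ) (u : Fin n → ℝ),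
      P.mulVec x = 0 → dotProduct (B.mulVec u) x = 0) := by
  refine ⟨fun x hx => (hP.mulVec_transpose_eq_zero_of_lyapunov hLyap hx).1,
    fun x hx => hP.mulVec_transpose_drift_eq_zero_of_lyapunov hLyap hx, fun x u hx => ?_⟩
  rw [dotProduct_comm, dotProduct_mulVec, ← mulVec_transpose,
    (hP.mulVec_transpose_eq_zero_of_lyapunov hLyap hx).2, zero_dotProduct]
end

section
/- Let O be a positive semidefinite real d×d matrix satisfying the Lyapunov equation Aᵀ O + O A + Nᵀ O N + Cᵀ C = 0 for matrices A, N ∈ ℝ^{d×d} and C ∈ ℝ^{m×d}. Then N(ker O) ⊆ ker O, A(ker O) ⊆ ker O, and ker(O) ⊆ ker(C). -/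
/-!
Evaluate the quadratic form of the Lyapunov equation at a vector `x ∈ ker O`. The terms
`xᵀAᵀOx` and `xᵀOAx` vanish because `O` is symmetric, leaving
`0 = (Nx)ᵀO(Nx) + ‖Cx‖²`, a sum of two nonnegative terms. Hence `Cx = 0`, and `O(Nx) = 0`
because a positive semidefinite form vanishes only on the kernel. Finally, applying the
equation itself to `x` kills every term except `O(Ax)`.
-/

open Matrix

namespace Matrix

variable {n m R : Type*} [Fintype n] [Fintype m]

theorem dotProduct_transpose_mul_mulVec [CommSemiring R] (B : Matrix m n R)
    (M : Matrix m n R) (x : n → R) :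
    x ⬝ᵥ (Bᵀ * M) *ᵥ x = (B *ᵥ x) ⬝ᵥ (M *ᵥ x) := by
  rw [← mulVec_mulVec, dotProduct_mulVec, vecMul_transpose]

theorem dotProduct_lyapunov_mulVec_of_mulVec_eq_zero [CommSemiring R]
    {A N O : Matrix n n R} (C : Matrix m n R) (hO : O.IsSymm) {x : n → R}
    (hx : O *ᵥ x = 0) :
    x ⬝ᵥ (Aᵀ * O + O * A + Nᵀ * O * N + Cᵀ * C) *ᵥ x
      = (N *ᵥ x) ⬝ᵥ (O *ᵥ (N *ᵥ x)) + (C *ᵥ x) ⬝ᵥ (C *ᵥ x) := by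
  have hOA : O * A = Oᵀ * A := by rw [hO.eq]
  rw [hOA, Matrix.mul_assoc Nᵀ]
  simp only [add_mulVec, dotProduct_add, dotProduct_transpose_mul_mulVec]
  rw [hx, ← mulVec_mulVec, dotProduct_zero, zero_dotProduct, zero_add, zero_add]

theorem lyapunov_mulVec_of_mulVec_eq_zero [CommSemiring R] {A N O : Matrix n n R}
    {C : Matrix m n R} {x : n → R} (hx : O *ᵥ x = 0) (hNx : O *ᵥ (N *ᵥ x) = 0)
    (hCx : C *ᵥ x = 0) :
    (Aᵀ * O + O * A + Nᵀ * O * N + Cᵀ * C) *ᵥ x = O *ᵥ (A *ᵥ x) := by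
  simp only [add_mulVec, ← mulVec_mulVec, hx, hNx, hCx, mulVec_zero, zero_add, add_zero]

end Matrix

/-- If a positive semidefinite `O` satisfies the observability Lyapunov equation
`Aᵀ O + O A + Nᵀ O N + Cᵀ C = 0`, then `ker O` is invariant under `A` and `N`
and is contained in `ker C`. -/
theorem kernel_invariance_observability_lyapunov
    {d m : ℕ} (A N O : Matrix (Fin d) (Fin d) ℝ) (C : Matrix (Fin m) (Fin d) ℝ)
    (hO : O.PosSemidef)
    (hLyap : Aᵀ * O + O * A + Nᵀ * O * N + Cᵀ * C = 0) :
    (∀ x : Fin d → ℝ, O.mulVec x = 0 → O.mulVec (N.mulVec x) = 0) ∧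
    (∀ x : Fin d → ℝ, O.mulVec x = 0 → O.mulVec (A.mulVec x) = 0) ∧
    (∀ x : Fin d → ℝ, O.mulVec x = 0 → C.mulVec x = 0) := by
  have hOsymm : O.IsSymm := isHermitian_iff_isSymm.mp hO.isHermitian
  have hNC : ∀ x, O *ᵥ x = 0 → O *ᵥ (N *ᵥ x) = 0 ∧ C *ᵥ x = 0 := by
    intro x hx
    have hsum : (N *ᵥ x) ⬝ᵥ (O *ᵥ (N *ᵥ x)) + (C *ᵥ x) ⬝ᵥ (C *ᵥ x) = 0 := by
      rw [← dotProduct_lyapunov_mulVec_of_mulVec_eq_zero C hOsymm hx, hLyap, zero_mulVec,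
        dotProduct_zero]
    have hN : 0 ≤ (N *ᵥ x) ⬝ᵥ (O *ᵥ (N *ᵥ x)) := by
      simpa only [star_trivial] using hO.dotProduct_mulVec_nonneg (N *ᵥ x)
    have hC : 0 ≤ (C *ᵥ x) ⬝ᵥ (C *ᵥ x) := by
      simpa only [star_trivial] using dotProduct_star_self_nonneg (C *ᵥ x)
    refine ⟨(hO.dotProduct_mulVec_zero_iff (N *ᵥ x)).mp ?_, dotProduct_self_eq_zero.mp ?_⟩
    · rw [star_trivial]
      linarith
    · linarith
  refine ⟨fun x hx => (hNC x hx).1, fun x hx => ?_, fun x hx => (hNC x hx).2⟩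
  rw [← lyapunov_mulVec_of_mulVec_eq_zero hx (hNC x hx).1 (hNC x hx).2, hLyap, zero_mulVec]
end

section
/- Let O be a symmetric positive semidefinite real d×d matrix satisfying Aᵀ O + O A + Nᵀ O N + Cᵀ C = 0, and let φ : [0,∞) → ℝ^d be a continuously differentiable solution of the delay equation φ'(t) = A φ(t) + N φ(t−τ) for t > 0 with φ(t) ∈ ker(O) for all t ∈ [−τ, 0]. Then C φ(t) = 0 for all t ≥ 0. -/
open Matrix Set

/-!
The proof is a Lyapunov–Krasovskii argument. Put
`V t = φ tᵀ O φ t + ∫_{t-τ}^t (N φ s)ᵀ O (N φ s) ds`.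
Along the delay equation the Lyapunov equation turns `V'` into
`-|C φ t|² + 2 φ tᵀ O N φ(t-τ) - (N φ(t-τ))ᵀ O (N φ(t-τ))`, which is at most `φ tᵀ O φ t ≤ V t`
since `2 aᵀ O b ≤ aᵀ O a + bᵀ O b`. The Lyapunov equation also shows that `ker O`
is `N`-invariant and contained in `ker C`, so `V 0 = 0`; Grönwall then gives `V ≡ 0`, i.e.
`φ t ∈ ker O ⊆ ker C`. Since `φ` is only known to be continuous on `[0, ∞)`, `V` is evaluated on
`s ↦ φ (max s 0)`, which changes only the history, where `N φ` is invisible to `O` anyway.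
-/

namespace Matrix

lemma IsSymm.dotProduct_mulVec_comm {n α : Type*} [Fintype n] [CommSemiring α] {O : Matrix n n α}
    (hO : O.IsSymm) (x y : n → α) : x ⬝ᵥ O *ᵥ y = y ⬝ᵥ O *ᵥ x := by
  rw [dotProduct_mulVec, ← mulVec_transpose, hO.eq, dotProduct_comm]

namespace PosSemidef

lemma isSymm {n : Type*} {O : Matrix n n ℝ} (hO : O.PosSemidef) : O.IsSymm :=
  isHermitian_iff_isSymm.mp hO.isHermitian

variable {n : Type*} [Fintype n] {O : Matrix n n ℝ}

lemma dotProduct_mulVec_self_nonneg (hO : O.PosSemidef) (x : n → ℝ) : 0 ≤ x ⬝ᵥ O *ᵥ x := by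
  simpa using hO.dotProduct_mulVec_nonneg x

lemma mulVec_eq_zero_of_dotProduct_mulVec_self_eq_zero (hO : O.PosSemidef) {x : n → ℝ}
    (hx : x ⬝ᵥ O *ᵥ x = 0) : O *ᵥ x = 0 :=
  (hO.dotProduct_mulVec_zero_iff x).mp (by simpa using hx)

lemma two_mul_dotProduct_mulVec_le (hO : O.PosSemidef) (x y : n → ℝ) :
    2 * (x ⬝ᵥ O *ᵥ y) ≤ x ⬝ᵥ O *ᵥ x + y ⬝ᵥ O *ᵥ y := by
  have h := hO.dotProduct_mulVec_self_nonneg (x - y)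
  simp only [mulVec_sub, sub_dotProduct, dotProduct_sub, hO.isSymm.dotProduct_mulVec_comm y x] at h
  linarith

end PosSemidef

end Matrix

section Lyapunov

variable {n p : Type*} [Fintype n] [Fintype p]

lemma lyapunov_quadratic {R : Type*} [CommRing R] {A N O : Matrix n n R} {C : Matrix p n R}
    (hO : O.IsSymm) (hLyap : Aᵀ * O + O * A + Nᵀ * O * N + Cᵀ * C = 0) (x : n → R) :
    2 * (x ⬝ᵥ O *ᵥ (A *ᵥ x)) + N *ᵥ x ⬝ᵥ O *ᵥ (N *ᵥ x) + C *ᵥ x ⬝ᵥ C *ᵥ x = 0 := by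
  have h := congrArg (fun M => x ⬝ᵥ M *ᵥ x) hLyap
  simp only [add_mulVec, ← mulVec_mulVec, dotProduct_add, zero_mulVec, dotProduct_zero] at h
  rw [dotProduct_mulVec x Aᵀ, ← mulVec_transpose, transpose_transpose,
    hO.dotProduct_mulVec_comm, dotProduct_mulVec x Nᵀ, ← mulVec_transpose, transpose_transpose,
    dotProduct_mulVec x Cᵀ, ← mulVec_transpose, transpose_transpose] at h
  linear_combination h

variable {A N O : Matrix n n ℝ} {C : Matrix p n ℝ}

lemma lyapunov_mulVec_eq_zero_of_mulVec_eq_zero (hO : O.PosSemidef)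
    (hLyap : Aᵀ * O + O * A + Nᵀ * O * N + Cᵀ * C = 0) {x : n → ℝ} (hx : O *ᵥ x = 0) :
    C *ᵥ x = 0 ∧ O *ᵥ (N *ᵥ x) = 0 := by
  have h := lyapunov_quadratic hO.isSymm hLyap x
  rw [hO.isSymm.dotProduct_mulVec_comm, hx, dotProduct_zero, mul_zero, zero_add] at h
  have hN := hO.dotProduct_mulVec_self_nonneg (N *ᵥ x)
  have hC : 0 ≤ C *ᵥ x ⬝ᵥ C *ᵥ x := by simpa using dotProduct_star_self_nonneg (C *ᵥ x)
  exact ⟨dotProduct_self_eq_zero.mp (by linarith),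
    hO.mulVec_eq_zero_of_dotProduct_mulVec_self_eq_zero (by linarith)⟩

lemma lyapunov_delay_bound (hO : O.PosSemidef)
    (hLyap : Aᵀ * O + O * A + Nᵀ * O * N + Cᵀ * C = 0) (x y : n → ℝ) :
    2 * (x ⬝ᵥ O *ᵥ (A *ᵥ x + N *ᵥ y)) + N *ᵥ x ⬝ᵥ O *ᵥ (N *ᵥ x) - N *ᵥ y ⬝ᵥ O *ᵥ (N *ᵥ y)
      ≤ x ⬝ᵥ O *ᵥ x := by
  have h := lyapunov_quadratic hO.isSymm hLyap x
  have hxy := hO.two_mul_dotProduct_mulVec_le x (N *ᵥ y)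
  have hC : 0 ≤ C *ᵥ x ⬝ᵥ C *ᵥ x := by simpa using dotProduct_star_self_nonneg (C *ᵥ x)
  rw [mulVec_add, dotProduct_add]
  linarith

end Lyapunov

section Calculus

variable {𝕜 : Type*} [NontriviallyNormedField 𝕜] {m n : Type*} [Fintype n]
  {f g : 𝕜 → n → 𝕜} {f' g' : n → 𝕜} {t : 𝕜}

lemma HasDerivAt.dotProduct (hf : HasDerivAt f f' t) (hg : HasDerivAt g g' t) :
    HasDerivAt (fun s => f s ⬝ᵥ g s) (f' ⬝ᵥ g t + f t ⬝ᵥ g') t := by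
  simp only [_root_.dotProduct, ← Finset.sum_add_distrib]
  exact HasDerivAt.fun_sum fun i _ => (hasDerivAt_pi.1 hf i).mul (hasDerivAt_pi.1 hg i)

lemma HasDerivAt.matrix_mulVec (M : Matrix m n 𝕜) (hg : HasDerivAt g g' t) :
    HasDerivAt (fun s => M *ᵥ g s) (M *ᵥ g') t :=
  hasDerivAt_pi.2 fun i => by
    simpa only [mulVec, _root_.dotProduct] using
      HasDerivAt.fun_sum fun j _ => (hasDerivAt_pi.1 hg j).const_mul (M i j)

end Calculus

lemma HasDerivAt.comp_max_const {E : Type*} [NormedAddCommGroup E] [NormedSpace ℝ E]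
    {φ : ℝ → E} {φ' : E} {c t : ℝ} (h : HasDerivAt φ φ' t) (ht : c < t) :
    HasDerivAt (fun s => φ (max s c)) φ' t :=
  h.congr_of_eventuallyEq <| by
    filter_upwards [eventually_gt_nhds ht] with s hs
    rw [max_eq_left hs.le]

lemma Continuous.hasDerivAt_integral_sub_const {E : Type*} [NormedAddCommGroup E] [NormedSpace ℝ E]
    [CompleteSpace E] {q : ℝ → E} (hq : Continuous q) (τ t : ℝ) :
    HasDerivAt (fun u => ∫ s in u - τ..u, q s) (q t - q (t - τ)) t := by
  have hF (u : ℝ) : HasDerivAt (fun v => ∫ s in 0..v, q s) (q u) u :=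
    (hq.integral_hasStrictDerivAt 0 u).hasDerivAt
  have hwindow : (fun u => ∫ s in u - τ..u, q s)
      = fun u => (∫ s in 0..u, q s) - ∫ s in 0..u - τ, q s := by
    ext u
    rw [intervalIntegral.integral_interval_sub_left (hq.intervalIntegrable _ _)
      (hq.intervalIntegrable _ _)]
  rw [hwindow]
  exact (hF t).sub (by simpa using (hF (t - τ)).comp_sub_const t τ)

lemma le_zero_of_hasDerivAt_le_mul_self {f f' : ℝ → ℝ} {a K : ℝ} (hf : ContinuousOn f (Ici a))
    (hf' : ∀ t > a, HasDerivAt f (f' t) t) (hbound : ∀ t > a, f' t ≤ K * f t) (ha : f a ≤ 0) :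
    ∀ t ≥ a, f t ≤ 0 := by
  set g : ℝ → ℝ := fun t => f t * Real.exp (-(K * t))
  have hg' (t : ℝ) (ht : a < t) : HasDerivAt g ((f' t - K * f t) * Real.exp (-(K * t))) t := by
    have hexp : HasDerivAt (fun s => Real.exp (-(K * s))) (Real.exp (-(K * t)) * -K) t := by
      simpa using ((hasDerivAt_id' t).const_mul K).neg.exp
    exact ((hf' t ht).mul hexp).congr_deriv (by ring)
  have hanti : AntitoneOn g (Ici a) :=
    antitoneOn_of_hasDerivWithinAt_nonpos (convex_Ici a) (hf.mul (by fun_prop))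
      (fun t ht => (hg' t (by simpa using ht)).hasDerivWithinAt) fun t ht =>
        mul_nonpos_of_nonpos_of_nonneg (sub_nonpos.2 (hbound t (by simpa using ht)))
          (Real.exp_pos _).le
  intro t ht
  have hgt : g t ≤ g a := hanti self_mem_Ici ht ht
  have hga : g a ≤ 0 := mul_nonpos_of_nonpos_of_nonneg ha (Real.exp_pos _).le
  exact nonpos_of_mul_nonpos_left (hgt.trans hga) (Real.exp_pos _)

section Krasovskii

variable {n : Type*} [Fintype n] {O N : Matrix n n ℝ} {τ : ℝ} {x : ℝ → n → ℝ}

noncomputable def krasovskiiFunctional (O N : Matrix n n ℝ) (τ : ℝ) (x : ℝ → n → ℝ) (t : ℝ) : ℝ :=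
  x t ⬝ᵥ O *ᵥ x t + ∫ s in t - τ..t, N *ᵥ x s ⬝ᵥ O *ᵥ (N *ᵥ x s)

lemma dotProduct_mulVec_self_le_krasovskiiFunctional (hO : O.PosSemidef) (hτ : 0 ≤ τ) (t : ℝ) :
    x t ⬝ᵥ O *ᵥ x t ≤ krasovskiiFunctional O N τ x t :=
  le_add_of_nonneg_right <| intervalIntegral.integral_nonneg (by linarith) fun s _ =>
    hO.dotProduct_mulVec_self_nonneg _

lemma krasovskiiFunctional_zero_eq_zero {A : Matrix n n ℝ} {p : Type*} [Fintype p]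
    {C : Matrix p n ℝ} (hO : O.PosSemidef) (hLyap : Aᵀ * O + O * A + Nᵀ * O * N + Cᵀ * C = 0)
    (hτ : 0 ≤ τ) (hx : ∀ s ∈ Icc (-τ) 0, O *ᵥ x s = 0) :
    krasovskiiFunctional O N τ x 0 = 0 := by
  have hintegrand : EqOn (fun s => N *ᵥ x s ⬝ᵥ O *ᵥ (N *ᵥ x s)) 0 (uIcc (0 - τ) 0) := by
    intro s hs
    rw [zero_sub, uIcc_of_le (by linarith)] at hs
    simp [(lyapunov_mulVec_eq_zero_of_mulVec_eq_zero hO hLyap (hx s hs)).2]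
  rw [krasovskiiFunctional, intervalIntegral.integral_congr hintegrand, hx 0 ⟨by linarith, le_rfl⟩]
  simp

lemma continuous_krasovskiiFunctional (hx : Continuous x) :
    Continuous (krasovskiiFunctional O N τ x) := by
  have hint : Continuous fun t => ∫ s in t - τ..t, N *ᵥ x s ⬝ᵥ O *ᵥ (N *ᵥ x s) :=
    continuous_iff_continuousAt.2 fun t =>
      ((Continuous.hasDerivAt_integral_sub_const (by fun_prop) τ t).continuousAt)
  exact (by fun_prop : Continuous fun t => x t ⬝ᵥ O *ᵥ x t).add hint

lemma hasDerivAt_krasovskiiFunctional (hO : O.IsSymm) (hx : Continuous x) {x' : n → ℝ} {t : ℝ}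
    (hxt : HasDerivAt x x' t) :
    HasDerivAt (krasovskiiFunctional O N τ x) (2 * (x t ⬝ᵥ O *ᵥ x')
      + N *ᵥ x t ⬝ᵥ O *ᵥ (N *ᵥ x t) - N *ᵥ x (t - τ) ⬝ᵥ O *ᵥ (N *ᵥ x (t - τ))) t := by
  have hquad := hxt.dotProduct (hxt.matrix_mulVec O)
  rw [hO.dotProduct_mulVec_comm x'] at hquad
  have hint := Continuous.hasDerivAt_integral_sub_const
    (q := fun s => N *ᵥ x s ⬝ᵥ O *ᵥ (N *ᵥ x s)) (by fun_prop) τ t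
  exact (hquad.add hint).congr_deriv (by ring)

end Krasovskii

/-- If the symmetric positive semidefinite `O` satisfies the observability Lyapunov
equation `Aᵀ O + O A + Nᵀ O N + Cᵀ C = 0` and `φ` is a `C¹` solution of the delay
equation `φ'(t) = A φ(t) + N φ(t − τ)` whose history lies in `ker O`, then the
output vanishes: `C φ(t) = 0` for all `t ≥ 0`. -/
theorem delay_unobservable_of_kernel_history
    {d m : ℕ} (A N O : Matrix (Fin d) (Fin d) ℝ) (C : Matrix (Fin m) (Fin d) ℝ)
    (τ : ℝ) (hτ : 0 < τ)
    (hO : O.PosSemidef)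
    (hLyap : Aᵀ * O + O * A + Nᵀ * O * N + Cᵀ * C = 0)
    (φ : ℝ → Fin d → ℝ)
    (hcont : ContinuousOn φ (Ici (0 : ℝ)))
    (hderiv : ∀ t > (0 : ℝ),
      HasDerivAt φ (A.mulVec (φ t) + N.mulVec (φ (t - τ))) t)
    (hhist : ∀ t ∈ Icc (-τ) (0 : ℝ), O.mulVec (φ t) = 0) :
    ∀ t ≥ (0 : ℝ), C.mulVec (φ t) = 0 := by
  have hker {v : Fin d → ℝ} (hv : O *ᵥ v = 0) :=
    lyapunov_mulVec_eq_zero_of_mulVec_eq_zero hO hLyap hv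
  set ψ : ℝ → Fin d → ℝ := fun s => φ (max s 0) with hψ
  have hψ_cont : Continuous ψ := hcont.comp_continuous (by fun_prop) fun s => le_max_right s 0
  have hdelay (t : ℝ) (ht : 0 < t) : N *ᵥ φ (t - τ) ⬝ᵥ O *ᵥ (N *ᵥ φ (t - τ))
      ≤ N *ᵥ ψ (t - τ) ⬝ᵥ O *ᵥ (N *ᵥ ψ (t - τ)) := by
    rcases le_total τ t with h | h
    · simp only [hψ, max_eq_left (sub_nonneg.2 h), le_rfl]
    · rw [(hker (hhist (t - τ) ⟨by linarith, by linarith⟩)).2, dotProduct_zero]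
      exact hO.dotProduct_mulVec_self_nonneg _
  have hV0 : krasovskiiFunctional O N τ ψ 0 = 0 :=
    krasovskiiFunctional_zero_eq_zero hO hLyap hτ.le fun s hs => by
      simpa only [hψ, max_eq_right hs.2] using hhist 0 ⟨by linarith, le_rfl⟩
  have hV : ∀ t ≥ 0, krasovskiiFunctional O N τ ψ t ≤ 0 :=
    le_zero_of_hasDerivAt_le_mul_self (K := 1)
      (continuous_krasovskiiFunctional hψ_cont).continuousOn
      (fun t ht => hasDerivAt_krasovskiiFunctional hO.isSymm hψ_cont
        ((hderiv t ht).comp_max_const ht))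
      (fun t ht => by
        rw [show φ t = ψ t by simp only [hψ, max_eq_left ht.le]]
        have := lyapunov_delay_bound hO hLyap (ψ t) (φ (t - τ))
        have := hdelay t ht
        have := dotProduct_mulVec_self_le_krasovskiiFunctional (N := N) (x := ψ) hO hτ.le t
        linarith) hV0.le
  intro t ht
  have hOφ : O *ᵥ φ t = 0 := by
    refine hO.mulVec_eq_zero_of_dotProduct_mulVec_self_eq_zero
      (le_antisymm ?_ (hO.dotProduct_mulVec_self_nonneg _))
    simpa only [hψ, max_eq_left ht] using
      (dotProduct_mulVec_self_le_krasovskiiFunctional (N := N) hO hτ.le t).trans (hV t ht)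
  exact (hker hOφ).1
end

section
/- Let P be a symmetric positive semidefinite real d×d matrix satisfying A P + P Aᵀ + N P Nᵀ + B Bᵀ = 0. Let V := (ker P)^⊥ = ran(P). Let φ : [0,∞) → ℝ^d be a C¹ solution of φ'(t) = A φ(t) + N φ(t−τ) + B u(t) with continuous control u : [0,∞) → ℝ^n and history φ(t) ∈ V for t ∈ [−τ,0]. Then φ(t) ∈ V for all t ≥ 0. -/
/-!
The Lyapunov equation forces `ker P` to be invariant under `Aᵀ` and `Nᵀ` and to lie in
`ker Bᵀ`: for `P x = 0`, pairing the equation with `x` leaves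
`⟨Nᵀx, P Nᵀx⟩ + ‖Bᵀx‖² = 0`, a sum of two nonnegative terms. Dually, `ran P = (ker P)^⊥` is
invariant under `A` and `N` and contains `ran B`.

On each interval `[kτ, (k + 1)τ]` the delayed term `N φ(t - τ)` is, by induction on `k`, a
known forcing with values in `ran P`, so the image of `φ` in the quotient by `ran P` solves the
linear ODE `ψ' = Ā ψ` with `ψ(kτ) = 0`; by uniqueness it vanishes on the whole interval.
-/

open Matrix Set Filter Topology
open scoped ComplexOrder

theorem eqOn_zero_of_hasDerivAt_clm_apply {F : Type*} [NormedAddCommGroup F] [NormedSpace ℝ F]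
    (L : F →L[ℝ] F) {ψ : ℝ → F} {a b : ℝ} (hcont : ContinuousOn ψ (Icc a b))
    (hderiv : ∀ t ∈ Ioo a b, HasDerivAt ψ (L (ψ t)) t) (ha : ψ a = 0) :
    EqOn ψ 0 (Icc a b) := by
  rcases le_or_gt b a with hba | hab
  · intro t ht
    rw [le_antisymm (ht.2.trans hba) ht.1, Pi.zero_apply, ha]
  have hcont_a : ContinuousWithinAt ψ (Ioo a b) a :=
    (hcont a (left_mem_Icc.2 hab.le)).mono Ioo_subset_Icc_self
  have hderiv_a : HasDerivWithinAt ψ (L (ψ a)) (Ici a) a := by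
    refine hasDerivWithinAt_Ici_of_tendsto_deriv
      (fun t ht => (hderiv t ht).differentiableAt.differentiableWithinAt) hcont_a
      (Ioo_mem_nhdsGT hab) ?_
    have hlim : Tendsto (fun t => L (ψ t)) (𝓝[>] a) (𝓝 (L (ψ a))) := by
      rw [← nhdsWithin_Ioo_eq_nhdsGT hab]
      exact (L.continuous.tendsto _).comp hcont_a
    refine hlim.congr' ?_
    filter_upwards [Ioo_mem_nhdsGT hab] with t ht
    exact (hderiv t ht).deriv.symm
  refine ODE_solution_unique (v := fun _ => L) (fun _ => L.lipschitz) hcont (fun t ht => ?_)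
    continuousOn_const (fun t _ => ?_) ha
  · rcases eq_or_lt_of_le ht.1 with rfl | hat
    · exact hderiv_a
    · exact (hderiv t ⟨hat, ht.2⟩).hasDerivWithinAt
  · rw [Pi.zero_apply, map_zero]
    exact hasDerivWithinAt_const t (Ici t) (0 : F)

namespace Submodule

variable {E : Type*} [NormedAddCommGroup E] [NormedSpace ℝ E] {V : Submodule ℝ E}

theorem mem_of_hasDerivAt_of_invariant (hV : IsClosed (V : Set E)) {A : E →L[ℝ] E}
    (hA : ∀ v ∈ V, A v ∈ V) {φ f : ℝ → E} {a b : ℝ} (hcont : ContinuousOn φ (Icc a b))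
    (hderiv : ∀ t ∈ Ioo a b, HasDerivAt φ (A (φ t) + f t) t) (hf : ∀ t ∈ Ioo a b, f t ∈ V)
    (ha : φ a ∈ V) : ∀ t ∈ Icc a b, φ t ∈ V := by
  -- makes the quotient seminorm on `E ⧸ V` a norm
  have := hV
  let Ā : E ⧸ V →L[ℝ] E ⧸ V := V.liftQL (V.mkQL ∘L A) fun v hv => by simpa using hA v hv
  have hĀ : ∀ x, Ā (V.mkQL x) = V.mkQL (A x) := fun x => rfl
  have hzero := eqOn_zero_of_hasDerivAt_clm_apply Ā (ψ := fun t => V.mkQL (φ t))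
    (V.mkQL.continuous.comp_continuousOn hcont) (fun t ht => ?_) (by simpa using ha)
  · intro t ht
    simpa using hzero ht
  · have hf0 : V.mkQL (f t) = 0 := (Quotient.mk_eq_zero V).2 (hf t ht)
    have := V.mkQL.hasFDerivAt.comp_hasDerivAt t (hderiv t ht)
    rwa [map_add, hf0, add_zero, ← hĀ] at this

theorem mem_of_hasDerivAt_delay_of_invariant (hV : IsClosed (V : Set E)) {A N : E →L[ℝ] E}
    (hA : ∀ v ∈ V, A v ∈ V) (hN : ∀ v ∈ V, N v ∈ V) {g : ℝ → E} (hg : ∀ t > 0, g t ∈ V)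
    {τ : ℝ} (hτ : 0 < τ) {φ : ℝ → E} (hcont : ContinuousOn φ (Ici 0))
    (hderiv : ∀ t > 0, HasDerivAt φ (A (φ t) + N (φ (t - τ)) + g t) t)
    (hhist : ∀ t ∈ Icc (-τ) 0, φ t ∈ V) : ∀ t ≥ 0, φ t ∈ V := by
  have hsteps : ∀ k : ℕ, ∀ t ∈ Icc (-τ) (k * τ), φ t ∈ V := by
    intro k
    induction k with
    | zero => simpa using hhist
    | succ k ih =>
      have hk : 0 ≤ (k : ℝ) * τ := by positivity
      have hnext := mem_of_hasDerivAt_of_invariant hV hA (f := fun t => N (φ (t - τ)) + g t)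
        (a := k * τ) (b := k * τ + τ) (hcont.mono fun t ht => hk.trans ht.1)
        (fun t ht => by simpa only [add_assoc] using hderiv t (hk.trans_lt ht.1))
        (fun t ht => V.add_mem (hN _ (ih _ ⟨by linarith [ht.1], by linarith [ht.2]⟩))
          (hg t (hk.trans_lt ht.1)))
        (ih _ ⟨by linarith, le_rfl⟩)
      intro t ht
      rcases le_or_gt t (k * τ) with htk | htk
      · exact ih t ⟨ht.1, htk⟩
      · exact hnext t ⟨htk.le, by push_cast at ht; linarith [ht.2]⟩
  intro t ht
  obtain ⟨k, hk⟩ := exists_nat_ge (t / τ)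
  exact hsteps k t ⟨by linarith, (div_le_iff₀ hτ).1 hk⟩

end Submodule

namespace Matrix

theorem star_dotProduct_mulVec {α : Type*} [CommSemiring α] [StarRing α]
    {m n : Type*} [Fintype m] [Fintype n] (M : Matrix m n α) (x : m → α) (y : n → α) :
    star x ⬝ᵥ M *ᵥ y = star (Mᴴ *ᵥ x) ⬝ᵥ y := by
  rw [dotProduct_mulVec, star_mulVec, conjTranspose_conjTranspose]

variable {𝕜 : Type*} [RCLike 𝕜] {m n : Type*} [Fintype m] [Fintype n] {P : Matrix m m 𝕜}

theorem IsHermitian.star_dotProduct_mulVec_eq_zero (hP : P.IsHermitian) {x : m → 𝕜}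
    (hx : P *ᵥ x = 0) (w : m → 𝕜) : star x ⬝ᵥ P *ᵥ w = 0 := by
  rw [star_dotProduct_mulVec, hP.eq, hx, star_zero, zero_dotProduct]

theorem IsHermitian.mem_range_mulVec_iff [DecidableEq m] (hP : P.IsHermitian) (v : m → 𝕜) :
    v ∈ range P.mulVec ↔ ∀ x, P *ᵥ x = 0 → star x ⬝ᵥ v = 0 := by
  have hT := isSymmetric_toEuclideanLin_iff.2 hP
  have hrange : LinearMap.range P.toEuclideanLin = (LinearMap.ker P.toEuclideanLin)ᗮ := by
    rw [← hT.orthogonal_range, Submodule.orthogonal_orthogonal]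
  refine ⟨fun ⟨w, hw⟩ x hx => hw ▸ hP.star_dotProduct_mulVec_eq_zero hx w, fun h => ?_⟩
  have : WithLp.toLp 2 v ∈ LinearMap.range P.toEuclideanLin := by
    rw [hrange, Submodule.mem_orthogonal]
    intro u hu
    rw [EuclideanSpace.inner_eq_star_dotProduct, dotProduct_comm]
    exact h _ (congrArg WithLp.ofLp hu)
  obtain ⟨w, hw⟩ := this
  exact ⟨WithLp.ofLp w, congrArg WithLp.ofLp hw⟩

theorem IsHermitian.mulVec_mem_range_mulVec [DecidableEq m] (hP : P.IsHermitian)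
    {M : Matrix m n 𝕜} (hM : ∀ x, P *ᵥ x = 0 → Mᴴ *ᵥ x = 0) (w : n → 𝕜) :
    M *ᵥ w ∈ range P.mulVec :=
  (hP.mem_range_mulVec_iff _).2 fun x hx => by
    rw [star_dotProduct_mulVec, hM x hx, star_zero, zero_dotProduct]

theorem IsHermitian.mapsTo_range_mulVec [DecidableEq m] (hP : P.IsHermitian)
    {M : Matrix m m 𝕜} (hM : ∀ x, P *ᵥ x = 0 → P *ᵥ (Mᴴ *ᵥ x) = 0) :
    MapsTo M.mulVec (range P.mulVec) (range P.mulVec) := by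
  rintro _ ⟨w, rfl⟩
  refine (hP.mem_range_mulVec_iff _).2 fun x hx => ?_
  rw [star_dotProduct_mulVec]
  exact hP.star_dotProduct_mulVec_eq_zero (hM x hx) w

theorem PosSemidef.mulVec_eq_zero_of_lyapunov {A N : Matrix m m 𝕜} {B : Matrix m n 𝕜}
    (hP : P.PosSemidef) (hLyap : A * P + P * Aᴴ + N * P * Nᴴ + B * Bᴴ = 0) {x : m → 𝕜}
    (hx : P *ᵥ x = 0) : Bᴴ *ᵥ x = 0 ∧ P *ᵥ (Nᴴ *ᵥ x) = 0 ∧ P *ᵥ (Aᴴ *ᵥ x) = 0 := by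
  have hvec : A *ᵥ (P *ᵥ x) + P *ᵥ (Aᴴ *ᵥ x) + N *ᵥ (P *ᵥ (Nᴴ *ᵥ x)) + B *ᵥ (Bᴴ *ᵥ x) = 0 := by
    simpa only [add_mulVec, ← mulVec_mulVec, zero_mulVec] using congrArg (· *ᵥ x) hLyap
  have hforms : star (Nᴴ *ᵥ x) ⬝ᵥ P *ᵥ (Nᴴ *ᵥ x) + star (Bᴴ *ᵥ x) ⬝ᵥ Bᴴ *ᵥ x = 0 := by
    simpa only [dotProduct_add, hx, mulVec_zero, dotProduct_zero, zero_add,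
      hP.1.star_dotProduct_mulVec_eq_zero hx, star_dotProduct_mulVec]
      using congrArg (star x ⬝ᵥ ·) hvec
  obtain ⟨hN, hB⟩ := (add_eq_zero_iff_of_nonneg (hP.dotProduct_mulVec_nonneg _)
    (dotProduct_star_self_nonneg _)).1 hforms
  have hN : P *ᵥ (Nᴴ *ᵥ x) = 0 := (hP.dotProduct_mulVec_zero_iff _).1 hN
  have hB : Bᴴ *ᵥ x = 0 := dotProduct_star_self_eq_zero.1 hB
  refine ⟨hB, hN, ?_⟩
  simpa only [hx, hN, hB, mulVec_zero, add_zero, zero_add] using hvec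

end Matrix

theorem delay_range_invariance_of_reachability_gramian_general
    {d n : ℕ} (A N P : Matrix (Fin d) (Fin d) ℝ) (B : Matrix (Fin d) (Fin n) ℝ)
    (τ : ℝ) (hτ : 0 < τ)
    (hP : P.PosSemidef)
    (hLyap : A * P + P * Aᵀ + N * P * Nᵀ + B * Bᵀ = 0)
    (u : ℝ → Fin n → ℝ)
    (φ : ℝ → Fin d → ℝ)
    (hcont : ContinuousOn φ (Ici (0 : ℝ)))
    (hderiv : ∀ t > (0 : ℝ),
      HasDerivAt φ (A.mulVec (φ t) + N.mulVec (φ (t - τ)) + B.mulVec (u t)) t)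
    (hhist : ∀ t ∈ Icc (-τ) (0 : ℝ), φ t ∈ Set.range P.mulVec) :
    ∀ t ≥ (0 : ℝ), φ t ∈ Set.range P.mulVec := by
  simp only [← conjTranspose_eq_transpose_of_trivial] at hLyap
  have hker := fun x (hx : P *ᵥ x = 0) => hP.mulVec_eq_zero_of_lyapunov hLyap hx
  exact Submodule.mem_of_hasDerivAt_delay_of_invariant (V := LinearMap.range P.mulVecLin)
    (Submodule.closed_of_finiteDimensional _)
    (A := LinearMap.toContinuousLinearMap A.mulVecLin)
    (N := LinearMap.toContinuousLinearMap N.mulVecLin)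
    (hP.1.mapsTo_range_mulVec fun x hx => (hker x hx).2.2)
    (hP.1.mapsTo_range_mulVec fun x hx => (hker x hx).2.1)
    (fun t _ => hP.1.mulVec_mem_range_mulVec (fun x hx => (hker x hx).1) (u t))
    hτ hcont hderiv hhist

/-- If the symmetric positive semidefinite `P` satisfies the reachability Lyapunov
equation `A P + P Aᵀ + N P Nᵀ + B Bᵀ = 0`, then the range of `P` (equivalently, the
orthogonal complement of `ker P`) is invariant under the controlled delay dynamics
`φ'(t) = A φ(t) + N φ(t − τ) + B u(t)`: a solution with history in `ran P` stays in
`ran P` for all `t ≥ 0`. -/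
theorem delay_range_invariance_of_reachability_gramian
    {d n : ℕ} (A N P : Matrix (Fin d) (Fin d) ℝ) (B : Matrix (Fin d) (Fin n) ℝ)
    (τ : ℝ) (hτ : 0 < τ)
    (hP : P.PosSemidef)
    (hLyap : A * P + P * Aᵀ + N * P * Nᵀ + B * Bᵀ = 0)
    (u : ℝ → Fin n → ℝ) (hu : Continuous u)
    (φ : ℝ → Fin d → ℝ)
    (hcont : ContinuousOn φ (Ici (0 : ℝ)))
    (hderiv : ∀ t > (0 : ℝ),
      HasDerivAt φ (A.mulVec (φ t) + N.mulVec (φ (t - τ)) + B.mulVec (u t)) t)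
    (hhist : ∀ t ∈ Icc (-τ) (0 : ℝ), φ t ∈ Set.range P.mulVec) :
    ∀ t ≥ (0 : ℝ), φ t ∈ Set.range P.mulVec :=
  delay_range_invariance_of_reachability_gramian_general A N P B τ hτ hP hLyap u φ hcont hderiv
    hhist
end

section
/- Let (T(t))_{t≥0} be a C₀-semigroup on a Hilbert space K with ‖T(t)‖ ≤ M e^{−ω t} for constants M ≥ 1, ω > 0, and let N be a bounded operator on K. If M‖N‖/√(2ω) < 1, then for each i ∈ ℕ the operator W_i : K → L²((0,∞)^{i+1}, H) defined by (W_i x)(t₁,…,t_{i+1}) = C T(t₁) N T(t₂) ⋯ N T(t_{i+1}) x (with C ∈ L(K,H) bounded) is a bounded operator with ‖W_i‖ ≤ M ‖C‖ (2ω)^{−1/2} (M‖N‖(2ω)^{−1/2})^i, and in particular the series ∑_i ‖W_i‖² converges. -/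
/-!
Pointwise, `‖C T(t₁) N T(t₂) ⋯ N T(t_{i+1}) x‖ ≤ ‖C‖ ‖N‖ⁱ ‖x‖ ∏ₖ M e^{-ω tₖ}`. The square of
this bound is a product of functions of the separate variables, so by Fubini its integral over
`(0,∞)^{i+1}` factors as `(‖C‖ ‖N‖ⁱ ‖x‖)² (∫₀^∞ M² e^{-2ωt} dt)^{i+1}
= (‖C‖ ‖N‖ⁱ ‖x‖)² (M²/(2ω))^{i+1}`. The squared bounds form a geometric series with ratio
`(M‖N‖)²/(2ω) < 1`.
-/

open MeasureTheory Set

section OperatorProducts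

variable {𝕜 E F : Type*} [NontriviallyNormedField 𝕜]
  [SeminormedAddCommGroup E] [NormedSpace 𝕜 E] [SeminormedAddCommGroup F] [NormedSpace 𝕜 F]

theorem ContinuousLinearMap.norm_list_prod_apply_le (l : List (E →L[𝕜] E)) (x : E) :
    ‖l.prod x‖ ≤ (l.map norm).prod * ‖x‖ := by
  induction l with
  | nil => simp
  | cons a l ih =>
    calc ‖a (l.prod x)‖ ≤ ‖a‖ * ‖l.prod x‖ := a.le_opNorm _
      _ ≤ ‖a‖ * ((l.map norm).prod * ‖x‖) := by gcongr
      _ = ((a :: l).map norm).prod * ‖x‖ := by simp [mul_assoc]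

theorem ContinuousLinearMap.norm_apply_ofFn_comp_prod_apply_le {i : ℕ} (C : E →L[𝕜] F)
    (N : E →L[𝕜] E) (S : Fin (i + 1) → E →L[𝕜] E) {b : Fin (i + 1) → ℝ}
    (hS : ∀ k, ‖S k‖ ≤ b k) (x : E) :
    ‖C (S 0 ((List.ofFn fun j : Fin i => N.comp (S j.succ)).prod x))‖
      ≤ ‖C‖ * ‖N‖ ^ i * ‖x‖ * ∏ k, b k := by
  have hb : ∀ k, 0 ≤ b k := fun k => (norm_nonneg _).trans (hS k)
  have htail : ‖(List.ofFn fun j : Fin i => N.comp (S j.succ)).prod x‖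
      ≤ (‖N‖ ^ i * ∏ j : Fin i, b j.succ) * ‖x‖ := by
    refine (norm_list_prod_apply_le _ x).trans (mul_le_mul_of_nonneg_right ?_ (norm_nonneg x))
    rw [List.map_ofFn, List.prod_ofFn, ← Fin.prod_const, ← Finset.prod_mul_distrib]
    exact Finset.prod_le_prod (fun _ _ => norm_nonneg _)
      fun j _ => (N.opNorm_comp_le _).trans (by gcongr; exact hS _)
  calc _ ≤ ‖C‖ * (‖S 0‖ * ‖(List.ofFn fun j : Fin i => N.comp (S j.succ)).prod x‖) :=
        (C.le_opNorm _).trans (by gcongr; exact (S 0).le_opNorm _)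
    _ ≤ ‖C‖ * (b 0 * ((‖N‖ ^ i * ∏ j : Fin i, b j.succ) * ‖x‖)) := by
        gcongr
        · exact hb 0
        · exact hS 0
    _ = ‖C‖ * ‖N‖ ^ i * ‖x‖ * ∏ k, b k := by rw [Fin.prod_univ_succ]; ring

end OperatorProducts

section BoxIntegrals

variable {ι α 𝕜 : Type*} [Fintype ι] [RCLike 𝕜] [MeasurableSpace α] {μ : ι → Measure α}
  [∀ k, SigmaFinite (μ k)]

theorem MeasureTheory.integrableOn_univ_pi_prod {s : ι → Set α} {f : ι → α → 𝕜}
    (hf : ∀ k, IntegrableOn (f k) (s k) (μ k)) :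
    IntegrableOn (fun t : ι → α => ∏ k, f k (t k)) (univ.pi s) (Measure.pi μ) := by
  rw [IntegrableOn, Measure.restrict_pi_pi]
  exact Integrable.fintype_prod hf

theorem MeasureTheory.setIntegral_univ_pi_prod (s : ι → Set α) (f : ι → α → 𝕜) :
    ∫ t in univ.pi s, ∏ k, f k (t k) ∂Measure.pi μ = ∏ k, ∫ u in s k, f k u ∂μ k := by
  rw [Measure.restrict_pi_pi, integral_fintype_prod_eq_prod]

end BoxIntegrals

theorem sq_mul_exp_neg_mul (M ω s : ℝ) :
    (M * Real.exp (-ω * s)) ^ 2 = M ^ 2 * Real.exp (-(2 * ω) * s) := by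
  rw [mul_pow, ← Real.exp_nat_mul]; ring_nf

theorem integrableOn_sq_mul_exp_neg_mul_Ioi (M : ℝ) {ω : ℝ} (hω : 0 < ω) :
    IntegrableOn (fun s => (M * Real.exp (-ω * s)) ^ 2) (Ioi 0) := by
  simp_rw [sq_mul_exp_neg_mul]
  exact (integrableOn_exp_mul_Ioi (by linarith) 0).const_mul _

theorem integral_sq_mul_exp_neg_mul_Ioi (M : ℝ) {ω : ℝ} (hω : 0 < ω) :
    ∫ s in Ioi (0 : ℝ), (M * Real.exp (-ω * s)) ^ 2 = M ^ 2 / (2 * ω) := by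
  simp_rw [sq_mul_exp_neg_mul]
  rw [integral_const_mul, integral_exp_mul_Ioi (by linarith)]
  field_simp
  simp

theorem setIntegral_Ioi_pi_le_of_le_prod_exp_decay {n : ℕ} {g : (Fin n → ℝ) → ℝ} (c M : ℝ)
    {ω : ℝ} (hω : 0 < ω) (hg_nonneg : ∀ t, 0 ≤ g t)
    (hg : ∀ t ∈ univ.pi (fun _ : Fin n => Ioi (0 : ℝ)),
      g t ≤ c * ∏ k, (M * Real.exp (-ω * t k)) ^ 2) :
    ∫ t in univ.pi (fun _ : Fin n => Ioi (0 : ℝ)), g t ≤ c * (M ^ 2 / (2 * ω)) ^ n := by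
  have hbox : MeasurableSet (univ.pi fun _ : Fin n => Ioi (0 : ℝ)) :=
    .univ_pi fun _ => measurableSet_Ioi
  have hint := (integrableOn_univ_pi_prod (μ := fun _ : Fin n => volume)
    fun _ => integrableOn_sq_mul_exp_neg_mul_Ioi M hω).const_mul c
  calc _ ≤ ∫ t in univ.pi (fun _ : Fin n => Ioi (0 : ℝ)),
        c * ∏ k, (M * Real.exp (-ω * t k)) ^ 2 :=
        integral_mono_of_nonneg (ae_of_all _ hg_nonneg) hint
          ((ae_restrict_iff' hbox).2 (ae_of_all _ hg))
    _ = c * (M ^ 2 / (2 * ω)) ^ n := by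
        rw [integral_const_mul, volume_pi,
          setIntegral_univ_pi_prod (f := fun _ s => (M * Real.exp (-ω * s)) ^ 2),
          integral_sq_mul_exp_neg_mul_Ioi M hω, Finset.prod_const, Finset.card_univ,
          Fintype.card_fin]

theorem summable_sq_mul_geometric (a : ℝ) {r : ℝ} (hr : |r| < 1) :
    Summable fun i : ℕ => (a * r ^ i) ^ 2 := by
  simp_rw [mul_pow, ← pow_mul, pow_mul']
  exact (summable_geometric_of_lt_one (sq_nonneg r)
    (by rwa [sq_lt_one_iff_abs_lt_one])).mul_left _

theorem observability_maps_bounded_and_summable_general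
    {K H : Type*} [NormedAddCommGroup K] [InnerProductSpace ℝ K]
    [NormedAddCommGroup H] [InnerProductSpace ℝ H]
    (T : ℝ → K →L[ℝ] K) (N : K →L[ℝ] K) (C : K →L[ℝ] H)
    (M ω : ℝ) (hM : 1 ≤ M) (hω : 0 < ω)
    (hTbound : ∀ t ≥ (0 : ℝ), ‖T t‖ ≤ M * Real.exp (-ω * t))
    (hsmall : M * ‖N‖ / Real.sqrt (2 * ω) < 1) :
    (∀ (i : ℕ) (x : K),
      (∫ t in univ.pi (fun _ : Fin (i + 1) => Ioi (0 : ℝ)),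
          ‖C ((T (t 0)) (((List.ofFn fun j : Fin i => N.comp (T (t j.succ))).prod) x))‖ ^ 2)
        ≤ (M * ‖C‖ / Real.sqrt (2 * ω) * (M * ‖N‖ / Real.sqrt (2 * ω)) ^ i) ^ 2 * ‖x‖ ^ 2) ∧
    Summable (fun i : ℕ =>
      (M * ‖C‖ / Real.sqrt (2 * ω) * (M * ‖N‖ / Real.sqrt (2 * ω)) ^ i) ^ 2) := by
  refine ⟨fun i x => ?_, summable_sq_mul_geometric _ ?_⟩
  · set a := ‖C‖ * ‖N‖ ^ i * ‖x‖
    have hbound : ∀ t ∈ univ.pi (fun _ : Fin (i + 1) => Ioi (0 : ℝ)),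
        ‖C ((T (t 0)) (((List.ofFn fun j : Fin i => N.comp (T (t j.succ))).prod) x))‖ ^ 2
          ≤ a ^ 2 * ∏ k, (M * Real.exp (-ω * t k)) ^ 2 := fun t ht => by
      rw [Finset.prod_pow, ← mul_pow]
      gcongr
      exact C.norm_apply_ofFn_comp_prod_apply_le N (fun k => T (t k))
        (fun k => hTbound _ (ht k (mem_univ k)).le) x
    calc _ ≤ a ^ 2 * (M ^ 2 / (2 * ω)) ^ (i + 1) :=
          setIntegral_Ioi_pi_le_of_le_prod_exp_decay _ M hω (fun _ => by positivity) hbound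
      _ = _ := by
          have hsq (c : ℝ) : (c / √(2 * ω)) ^ 2 = c ^ 2 / (2 * ω) := by
            rw [div_pow, Real.sq_sqrt (by positivity)]
          rw [mul_pow (M * ‖C‖ / √(2 * ω)), ← pow_mul, pow_mul', hsq, hsq]
          ring
  · have hM0 : 0 ≤ M := by linarith
    rwa [abs_of_nonneg (by positivity)]

/-- For an exponentially stable `C₀`-semigroup `T` with `‖T(t)‖ ≤ M e^{-ω t}` and a
bounded operator `N` with `M‖N‖/√(2ω) < 1`, each observability-type map
`W_i x : (t₁,…,t_{i+1}) ↦ C T(t₁) N T(t₂) ⋯ N T(t_{i+1}) x` is bounded from `K` to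
`L²((0,∞)^{i+1}, H)` with `‖W_i‖ ≤ M‖C‖(2ω)^{-1/2} (M‖N‖(2ω)^{-1/2})^i`, and the
squares of these bounds are summable. -/
theorem observability_maps_bounded_and_summable
    {K H : Type*} [NormedAddCommGroup K] [InnerProductSpace ℝ K] [CompleteSpace K]
    [NormedAddCommGroup H] [InnerProductSpace ℝ H] [CompleteSpace H]
    (T : ℝ → K →L[ℝ] K) (N : K →L[ℝ] K) (C : K →L[ℝ] H)
    (M ω : ℝ) (hM : 1 ≤ M) (hω : 0 < ω)
    (hT0 : T 0 = 1)
    (hTsemi : ∀ s t : ℝ, 0 ≤ s → 0 ≤ t → T (s + t) = (T s).comp (T t))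
    (hTbound : ∀ t ≥ (0 : ℝ), ‖T t‖ ≤ M * Real.exp (-ω * t))
    (hsmall : M * ‖N‖ / Real.sqrt (2 * ω) < 1) :
    (∀ (i : ℕ) (x : K),
      (∫ t in univ.pi (fun _ : Fin (i + 1) => Ioi (0 : ℝ)),
          ‖C ((T (t 0)) (((List.ofFn fun j : Fin i => N.comp (T (t j.succ))).prod) x))‖ ^ 2)
        ≤ (M * ‖C‖ / Real.sqrt (2 * ω) * (M * ‖N‖ / Real.sqrt (2 * ω)) ^ i) ^ 2 * ‖x‖ ^ 2) ∧
    Summable (fun i : ℕ =>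
      (M * ‖C‖ / Real.sqrt (2 * ω) * (M * ‖N‖ / Real.sqrt (2 * ω)) ^ i) ^ 2) :=
  observability_maps_bounded_and_summable_general T N C M ω hM hω hTbound hsmall
end

section
/- Let (T(t))_{t≥0} be a C₀-semigroup on a Hilbert space with ‖T(t)‖ ≤ M e^{−ω t}, where ω > α ≥ 0, and let N be a bounded operator with (M e^{ατ}/(ω−α))‖N‖ < 1. Then every continuous mild solution of φ'(t) = A φ(t) + N φ(t−τ) with bounded history on [−τ,0] satisfies ‖φ(t)‖ ≤ 𝓜 e^{−α t} sup_{s∈[−τ,0]}‖φ(s)‖ for some constant 𝓜 depending only on M, ω, α, τ, ‖N‖. -/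
/-!
Let `ψ(t) = e^{αt} ‖φ(t)‖` and `S = sup_{[-τ,0]} ‖φ‖`. On a window `[0, t]` let `ψ` attain its
maximum at `u`, and put `R = max S (ψ u)`. Then `‖φ(s)‖ ≤ e^{-αs} R` on the whole of `[-τ, t]`,
and inserting this into the variation-of-constants formula at `u` gives `ψ(u) ≤ M S + q R` with
`q = M e^{ατ} ‖N‖ / (ω - α) < 1`. Hence `R ≤ M S + q R`, i.e. `R ≤ M S / (1 - q)`, which bounds
`ψ(t) ≤ R` uniformly in `t`.
-/

open Set intervalIntegral Real

theorem integral_exp_mul_le {c : ℝ} (hc : 0 < c) {u : ℝ} (hu : 0 ≤ u) :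
    ∫ s in (0 : ℝ)..u, exp (c * s) ≤ exp (c * u) / c := by
  rw [integral_of_le hu, ← integral_exp_mul_Iic hc u]
  exact MeasureTheory.setIntegral_mono_set (integrableOn_exp_mul_Iic hc u)
    (Filter.Eventually.of_forall fun _ => (exp_pos _).le) Ioc_subset_Iic_self.eventuallyLE

theorem le_exp_neg_mul_of_le_on_history {x : ℝ → ℝ} {α τ u S R : ℝ} (hα : 0 ≤ α)
    (hhist : ∀ s ∈ Icc (-τ) 0, x s ≤ S) (hSR : S ≤ R) (hR : 0 ≤ R)
    (hψ : ∀ s ∈ Icc 0 u, exp (α * s) * x s ≤ R) :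
    ∀ s ∈ Icc (-τ) u, x s ≤ exp (-α * s) * R := by
  intro s hs
  rcases le_total s 0 with hs0 | hs0
  · have : 1 ≤ exp (-α * s) := one_le_exp (by nlinarith)
    nlinarith [hhist s ⟨hs.1, hs0⟩]
  · have := hψ s ⟨hs0, hs.2⟩
    rw [neg_mul, exp_neg, ← div_eq_inv_mul, le_div_iff₀ (exp_pos _)]
    linarith

theorem integral_delay_kernel_le {x : ℝ → ℝ} (hx : Continuous x) {M ω α τ k u R : ℝ}
    (hM : 0 ≤ M) (hk : 0 ≤ k) (hR : 0 ≤ R) (hαω : α < ω) (hτ : 0 ≤ τ) (hu : 0 ≤ u)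
    (hbound : ∀ s ∈ Icc (-τ) u, x s ≤ exp (-α * s) * R) :
    ∫ s in (0 : ℝ)..u, M * exp (-ω * (u - s)) * (k * x (s - τ))
      ≤ M * exp (α * τ) / (ω - α) * k * R * exp (-α * u) := by
  set C := M * k * R * exp (α * τ) * exp (-ω * u)
  have hC : 0 ≤ C := by positivity
  have hpointwise : ∀ s ∈ Icc 0 u,
      M * exp (-ω * (u - s)) * (k * x (s - τ)) ≤ C * exp ((ω - α) * s) := by
    intro s hs
    have hkernel : exp (-ω * (u - s)) * exp (-α * (s - τ))
        = exp (α * τ) * exp (-ω * u) * exp ((ω - α) * s) := by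
      simp only [← exp_add]; ring_nf
    calc M * exp (-ω * (u - s)) * (k * x (s - τ))
        ≤ M * exp (-ω * (u - s)) * (k * (exp (-α * (s - τ)) * R)) := by
          gcongr; exact hbound _ ⟨by linarith [hs.1], by linarith [hs.2]⟩
      _ = C * exp ((ω - α) * s) := by
          simp only [C]; linear_combination M * k * R * hkernel
  have hexp : exp (-ω * u) * exp ((ω - α) * u) = exp (-α * u) := by
    rw [← exp_add]; ring_nf
  calc ∫ s in (0 : ℝ)..u, M * exp (-ω * (u - s)) * (k * x (s - τ))
      ≤ ∫ s in (0 : ℝ)..u, C * exp ((ω - α) * s) :=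
        integral_mono_on hu (by apply Continuous.intervalIntegrable; fun_prop)
          (by apply Continuous.intervalIntegrable; fun_prop) hpointwise
    _ = C * ∫ s in (0 : ℝ)..u, exp ((ω - α) * s) := integral_const_mul _ _
    _ ≤ C * (exp ((ω - α) * u) / (ω - α)) :=
        mul_le_mul_of_nonneg_left (integral_exp_mul_le (sub_pos.mpr hαω) hu) hC
    _ = M * exp (α * τ) / (ω - α) * k * R * exp (-α * u) := by
        simp only [C]; linear_combination M * k * R * exp (α * τ) / (ω - α) * hexp

theorem exp_decay_of_delay_integral_inequality {x : ℝ → ℝ} (hx : Continuous x) {M ω α τ k S : ℝ}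
    (hM : 1 ≤ M) (hα : 0 ≤ α) (hαω : α < ω) (hτ : 0 ≤ τ) (hk : 0 ≤ k) (hS : 0 ≤ S)
    (hsmall : M * exp (α * τ) / (ω - α) * k < 1)
    (hhist : ∀ s ∈ Icc (-τ) 0, x s ≤ S)
    (hineq : ∀ u ≥ (0 : ℝ), x u ≤ M * exp (-ω * u) * x 0
      + ∫ s in (0 : ℝ)..u, M * exp (-ω * (u - s)) * (k * x (s - τ))) :
    ∀ t ≥ (0 : ℝ), x t ≤ M / (1 - M * exp (α * τ) / (ω - α) * k) * exp (-α * t) * S := by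
  intro t ht
  set q := M * exp (α * τ) / (ω - α) * k
  have hq : 0 ≤ q := mul_nonneg (div_nonneg (by positivity) (sub_pos.mpr hαω).le) hk
  obtain ⟨u, ⟨hu0, hut⟩, humax⟩ := isCompact_Icc.exists_isMaxOn (nonempty_Icc.mpr ht)
    (by fun_prop : Continuous fun s => exp (α * s) * x s).continuousOn
  set R := max S (exp (α * u) * x u)
  have hR : 0 ≤ R := hS.trans (le_max_left _ _)
  have hbound := le_exp_neg_mul_of_le_on_history hα hhist (le_max_left _ _) hR
    fun s hs => (humax hs).trans (le_max_right _ _)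
  have hxu : x u ≤ M * exp (-ω * u) * S + q * R * exp (-α * u) :=
    calc x u ≤ M * exp (-ω * u) * x 0
          + ∫ s in (0 : ℝ)..u, M * exp (-ω * (u - s)) * (k * x (s - τ)) := hineq u hu0
      _ ≤ M * exp (-ω * u) * S + q * R * exp (-α * u) :=
        add_le_add
          (mul_le_mul_of_nonneg_left (hhist 0 ⟨by linarith, le_rfl⟩)
            (mul_nonneg (by linarith) (exp_pos _).le))
          (integral_delay_kernel_le hx (by linarith) hk hR hαω hτ hu0
            fun s hs => hbound s ⟨hs.1, hs.2.trans hut⟩)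
  have hdecay : exp (α * u) * exp (-ω * u) ≤ 1 := by
    rw [← exp_add]; exact exp_le_one_iff.mpr (by nlinarith)
  have hcancel : exp (α * u) * exp (-α * u) = 1 := by rw [← exp_add]; simp
  have hψu : exp (α * u) * x u ≤ M * S + q * R :=
    calc exp (α * u) * x u ≤ exp (α * u) * (M * exp (-ω * u) * S + q * R * exp (-α * u)) :=
          mul_le_mul_of_nonneg_left hxu (exp_pos _).le
      _ = M * S * (exp (α * u) * exp (-ω * u)) + q * R := by
          linear_combination q * R * hcancel
      _ ≤ M * S + q * R := by
          linarith [mul_le_of_le_one_right (mul_nonneg (by linarith : 0 ≤ M) hS) hdecay]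
  have hRle : R ≤ M / (1 - q) * S := by
    have : R ≤ M * S + q * R := max_le (by nlinarith [mul_nonneg hq hR]) hψu
    rw [div_mul_eq_mul_div, le_div_iff₀ (by linarith)]
    linarith
  calc x t ≤ exp (-α * t) * R := hbound t ⟨by linarith, le_rfl⟩
    _ ≤ exp (-α * t) * (M / (1 - q) * S) := by gcongr
    _ = M / (1 - q) * exp (-α * t) * S := by ring

theorem norm_le_of_mild_solution {E : Type*} [NormedAddCommGroup E] [NormedSpace ℝ E]
    {T : ℝ → E →L[ℝ] E} {N : E →L[ℝ] E} {φ : ℝ → E} (hφ : Continuous φ) {M ω τ u : ℝ}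
    (hu : 0 ≤ u) (hT : ∀ t ≥ (0 : ℝ), ‖T t‖ ≤ M * exp (-ω * t))
    (hmild : φ u = T u (φ 0) + ∫ s in (0 : ℝ)..u, T (u - s) (N (φ (s - τ)))) :
    ‖φ u‖ ≤ M * exp (-ω * u) * ‖φ 0‖
      + ∫ s in (0 : ℝ)..u, M * exp (-ω * (u - s)) * (‖N‖ * ‖φ (s - τ)‖) := by
  have hintegrand : ∀ s ∈ Ioc 0 u,
      ‖T (u - s) (N (φ (s - τ)))‖ ≤ M * exp (-ω * (u - s)) * (‖N‖ * ‖φ (s - τ)‖) := by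
    intro s hs
    have hTs := hT (u - s) (sub_nonneg.mpr hs.2)
    exact ((T _).le_of_opNorm_le hTs _).trans <|
      mul_le_mul_of_nonneg_left (N.le_opNorm _) ((norm_nonneg _).trans hTs)
  rw [hmild]
  refine (norm_add_le _ _).trans (add_le_add ((T u).le_of_opNorm_le (hT u hu) _) ?_)
  refine norm_integral_le_of_norm_le hu (Filter.Eventually.of_forall hintegrand) ?_
  apply Continuous.intervalIntegrable
  fun_prop

theorem delay_mild_solution_exponential_decay_general
    {K : Type*} [NormedAddCommGroup K] [InnerProductSpace ℝ K]
    (T : ℝ → K →L[ℝ] K) (N : K →L[ℝ] K)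
    (M ω α τ : ℝ) (hM : 1 ≤ M) (hα : 0 ≤ α) (hαω : α < ω) (hτ : 0 < τ)
    (hTbound : ∀ t ≥ (0 : ℝ), ‖T t‖ ≤ M * Real.exp (-ω * t))
    (hsmall : M * Real.exp (α * τ) / (ω - α) * ‖N‖ < 1) :
    ∃ 𝓜 > (0 : ℝ), ∀ φ : ℝ → K, Continuous φ →
      (∀ t ≥ (0 : ℝ),
        φ t = (T t) (φ 0) + ∫ s in (0 : ℝ)..t, (T (t - s)) (N (φ (s - τ)))) →
      ∀ t ≥ (0 : ℝ),
        ‖φ t‖ ≤ 𝓜 * Real.exp (-α * t) * ⨆ s : Icc (-τ) (0 : ℝ), ‖φ s‖ := by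
  refine ⟨M / (1 - M * exp (α * τ) / (ω - α) * ‖N‖), div_pos (by linarith) (sub_pos.mpr hsmall),
    fun φ hφ hmild => ?_⟩
  have hbdd : BddAbove (range fun s : Icc (-τ) (0 : ℝ) => ‖φ s‖) :=
    (isCompact_range (by fun_prop)).bddAbove
  exact exp_decay_of_delay_integral_inequality hφ.norm hM hα hαω hτ.le (norm_nonneg N)
    (Real.iSup_nonneg fun _ => norm_nonneg _) hsmall (fun s hs => le_ciSup hbdd ⟨s, hs⟩)
    fun u hu => norm_le_of_mild_solution hφ hu hTbound (hmild u hu)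

/-- Exponential decay of mild solutions of the delay equation
`φ'(t) = A φ(t) + N φ(t−τ)`: if `‖T(t)‖ ≤ M e^{-ω t}` with `ω > α ≥ 0` and
`(M e^{ατ}/(ω − α)) ‖N‖ < 1`, then there is a constant `𝓜 > 0`, depending only on
the parameters, such that every continuous mild solution (variation of constants)
satisfies `‖φ(t)‖ ≤ 𝓜 e^{-α t} sup_{s ∈ [−τ,0]} ‖φ(s)‖`. -/
theorem delay_mild_solution_exponential_decay
    {K : Type*} [NormedAddCommGroup K] [InnerProductSpace ℝ K] [CompleteSpace K]
    (T : ℝ → K →L[ℝ] K) (N : K →L[ℝ] K)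
    (M ω α τ : ℝ) (hM : 1 ≤ M) (hα : 0 ≤ α) (hαω : α < ω) (hτ : 0 < τ)
    (hT0 : T 0 = 1)
    (hTsemi : ∀ s t : ℝ, 0 ≤ s → 0 ≤ t → T (s + t) = (T s).comp (T t))
    (hTbound : ∀ t ≥ (0 : ℝ), ‖T t‖ ≤ M * Real.exp (-ω * t))
    (hsmall : M * Real.exp (α * τ) / (ω - α) * ‖N‖ < 1) :
    ∃ 𝓜 > (0 : ℝ), ∀ φ : ℝ → K, Continuous φ →
      (∀ t ≥ (0 : ℝ),
        φ t = (T t) (φ 0) + ∫ s in (0 : ℝ)..t, (T (t - s)) (N (φ (s - τ)))) →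
      ∀ t ≥ (0 : ℝ),
        ‖φ t‖ ≤ 𝓜 * Real.exp (-α * t) * ⨆ s : Icc (-τ) (0 : ℝ), ‖φ s‖ :=
  delay_mild_solution_exponential_decay_general T N M ω α τ hM hα hαω hτ hTbound hsmall
end

section
/- Let W : K → F and R : G → K be bounded operators between separable Hilbert spaces with H := W R of trace class. If W = ⊕_i W_i and R decomposes as R(f,g) = ∑_i (F_i f_i + G_i g_i) compatibly with orthogonal decompositions F = ⊕ F_i, G = (⊕ 𝔉_i) ⊕ (⊕ 𝔊_i), then ∑_i ‖W_i F_i‖_{TC} ≤ ‖H‖_{TC} and ∑_i ‖W_i G_i‖_{TC} ≤ ‖H‖_{TC}, where ‖·‖_{TC} denotes the trace norm. -/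
open scoped RealInnerProductSpace ENNReal

/-- The trace norm via its variational characterization: the supremum over (finite)
orthonormal families `(e_n)`, `(f_n)` of `∑ₙ |⟨f_n, T e_n⟩|`. -/
noncomputable def traceNorm {E F : Type*}
    [NormedAddCommGroup E] [InnerProductSpace ℝ E]
    [NormedAddCommGroup F] [InnerProductSpace ℝ F] (T : E →L[ℝ] F) : ℝ≥0∞ :=
  ⨆ (n : ℕ) (e : Fin n → E) (f : Fin n → F)
    (_ : Orthonormal ℝ e) (_ : Orthonormal ℝ f),
      ∑ i : Fin n, ENNReal.ofReal |⟪f i, T (e i)⟫|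

/-- Data for the variational characterization: a pair of finite orthonormal families. -/
structure TNData (E F : Type*)
    [NormedAddCommGroup E] [InnerProductSpace ℝ E]
    [NormedAddCommGroup F] [InnerProductSpace ℝ F] where
  n : ℕ
  e : Fin n → E
  f : Fin n → F
  he : Orthonormal ℝ e
  hf : Orthonormal ℝ f

noncomputable def TNData.val {E F : Type*}
    [NormedAddCommGroup E] [InnerProductSpace ℝ E]
    [NormedAddCommGroup F] [InnerProductSpace ℝ F]
    (T : E →L[ℝ] F) (d : TNData E F) : ℝ≥0∞ :=
  ∑ i : Fin d.n, ENNReal.ofReal |⟪d.f i, T (d.e i)⟫|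

instance {E F : Type*}
    [NormedAddCommGroup E] [InnerProductSpace ℝ E]
    [NormedAddCommGroup F] [InnerProductSpace ℝ F] : Nonempty (TNData E F) :=
  ⟨⟨0, fun i => i.elim0, fun i => i.elim0,
    ⟨fun i => i.elim0, fun i => i.elim0⟩, ⟨fun i => i.elim0, fun i => i.elim0⟩⟩⟩

lemma traceNorm_eq_iSup {E F : Type*}
    [NormedAddCommGroup E] [InnerProductSpace ℝ E]
    [NormedAddCommGroup F] [InnerProductSpace ℝ F] (T : E →L[ℝ] F) :
    traceNorm T = ⨆ d : TNData E F, d.val T := by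
  apply le_antisymm
  · refine iSup_le fun n => iSup_le fun e => iSup_le fun f => iSup_le fun he =>
      iSup_le fun hf => ?_
    exact le_iSup (TNData.val T) ⟨n, e, f, he, hf⟩
  · refine iSup_le fun d => ?_
    exact le_iSup_of_le d.n (le_iSup_of_le d.e (le_iSup_of_le d.f
      (le_iSup_of_le d.he (le_iSup_of_le d.hf le_rfl))))

lemma finset_sum_iSup_le_iSup {ι : Type*} [DecidableEq ι] {D : ι → Type*}
    [∀ i, Nonempty (D i)] (v : ∀ i, D i → ℝ≥0∞) (s : Finset ι) :
    ∑ i ∈ s, (⨆ d, v i d) ≤ ⨆ c : ∀ i, D i, ∑ i ∈ s, v i (c i) := by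
  classical
  induction s using Finset.induction with
  | empty => simp
  | @insert a s ha ih =>
    rw [Finset.sum_insert ha]
    have key : ∀ (x : D a) (c : ∀ i, D i),
        v a x + ∑ i ∈ s, v i (c i) ≤ ⨆ c : ∀ i, D i, ∑ i ∈ insert a s, v i (c i) := by
      intro x c
      refine le_trans ?_ (le_iSup (fun c : ∀ i, D i => ∑ i ∈ insert a s, v i (c i))
        (Function.update c a x))
      have hsum : ∑ i ∈ s, v i (Function.update c a x i) = ∑ i ∈ s, v i (c i) :=
        Finset.sum_congr rfl fun i hi => by
          rw [Function.update_of_ne (ne_of_mem_of_not_mem hi ha)]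
      rw [Finset.sum_insert ha, Function.update_self, hsum]
    calc (⨆ d, v a d) + ∑ i ∈ s, (⨆ d, v i d)
        ≤ (⨆ d, v a d) + ⨆ c : ∀ i, D i, ∑ i ∈ s, v i (c i) := by gcongr
      _ ≤ _ := ENNReal.iSup_add_iSup_le key

lemma finset_sum_iSup_le {ι : Type*} [DecidableEq ι] {D : ι → Type*} [∀ i, Nonempty (D i)]
    (v : ∀ i, D i → ℝ≥0∞) (s : Finset ι) {C : ℝ≥0∞}
    (h : ∀ c : ∀ i, D i, ∑ i ∈ s, v i (c i) ≤ C) :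
    ∑ i ∈ s, (⨆ d, v i d) ≤ C :=
  (finset_sum_iSup_le_iSup v s).trans (iSup_le h)

/-- Key lemma: for pairwise-orthogonal isometric embeddings on both sides,
the diagonal blocks' trace norms sum to at most the trace norm of `H`. -/
lemma key_lemma
    {G F : Type*} [NormedAddCommGroup G] [InnerProductSpace ℝ G]
    [NormedAddCommGroup F] [InnerProductSpace ℝ F]
    (X Fsp : ℕ → Type*)
    [∀ i, NormedAddCommGroup (X i)] [∀ i, InnerProductSpace ℝ (X i)]
    [∀ i, NormedAddCommGroup (Fsp i)] [∀ i, InnerProductSpace ℝ (Fsp i)]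
    (H : G →L[ℝ] F)
    (A : ∀ i, X i →ₗᵢ[ℝ] G) (V : ∀ i, Fsp i →ₗᵢ[ℝ] F)
    (hA : ∀ i j x y, i ≠ j → ⟪A i x, A j y⟫ = 0)
    (hV : ∀ i j x y, i ≠ j → ⟪V i x, V j y⟫ = 0)
    (T : ∀ i, X i →L[ℝ] Fsp i)
    (hT : ∀ i x y, ⟪(T i) x, y⟫ = ⟪H ((A i) x), (V i) y⟫) :
    (∑' i, traceNorm (T i)) ≤ traceNorm H := by
  rw [ENNReal.tsum_eq_iSup_sum]
  refine iSup_le fun s => ?_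
  simp only [traceNorm_eq_iSup]
  refine finset_sum_iSup_le _ s fun c => ?_
  -- combined families
  set Idx := Σ i : {x // x ∈ s}, Fin (c i.1).n with hIdx
  let ev : Idx → G := fun p => A p.1.1 ((c p.1.1).e p.2)
  let fv : Idx → F := fun p => V p.1.1 ((c p.1.1).f p.2)
  have hev : Orthonormal ℝ ev := by
    constructor
    · rintro ⟨⟨i, hi⟩, j⟩
      simp only [ev, (A i).norm_map]
      exact (c i).he.1 j
    · rintro ⟨⟨i, hi⟩, j⟩ ⟨⟨i', hi'⟩, j'⟩ hne
      by_cases h : i = i'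
      · subst h
        simp only [ev, LinearIsometry.inner_map_map]
        refine (c i).he.2 ?_
        rintro rfl
        exact hne rfl
      · exact hA i i' _ _ h
  have hfv : Orthonormal ℝ fv := by
    constructor
    · rintro ⟨⟨i, hi⟩, j⟩
      simp only [fv, (V i).norm_map]
      exact (c i).hf.1 j
    · rintro ⟨⟨i, hi⟩, j⟩ ⟨⟨i', hi'⟩, j'⟩ hne
      by_cases h : i = i'
      · subst h
        simp only [fv, LinearIsometry.inner_map_map]
        refine (c i).hf.2 ?_
        rintro rfl
        exact hne rfl
      · exact hV i i' _ _ h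
  have : Nonempty (Fintype Idx) := ⟨inferInstance⟩
  let σ : Fin (Fintype.card Idx) ≃ Idx := (Fintype.equivFin Idx).symm
  have heσ : Orthonormal ℝ (ev ∘ σ) := hev.comp σ σ.injective
  have hfσ : Orthonormal ℝ (fv ∘ σ) := hfv.comp σ σ.injective
  have hval : ∑ i ∈ s, (c i).val (T i)
      = ∑ k : Fin (Fintype.card Idx), ENNReal.ofReal |⟪fv (σ k), H (ev (σ k))⟫| := by
    rw [Equiv.sum_comp σ (fun p => ENNReal.ofReal |⟪fv p, H (ev p)⟫|)]
    rw [← Finset.sum_coe_sort s (fun i => (c i).val (T i))]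
    rw [← Finset.univ_sigma_univ, Finset.sum_sigma]
    refine Finset.sum_congr rfl fun i _ => ?_
    unfold TNData.val
    refine Finset.sum_congr rfl fun j _ => ?_
    have h1 : ⟪(c ↑i).f j, (T ↑i) ((c ↑i).e j)⟫ = ⟪fv ⟨i, j⟩, H (ev ⟨i, j⟩)⟫ :=
      calc ⟪(c ↑i).f j, (T ↑i) ((c ↑i).e j)⟫
          = ⟪(T ↑i) ((c ↑i).e j), (c ↑i).f j⟫ := real_inner_comm _ _
        _ = ⟪H ((A ↑i) ((c ↑i).e j)), (V ↑i) ((c ↑i).f j)⟫ := hT _ _ _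
        _ = ⟪fv ⟨i, j⟩, H (ev ⟨i, j⟩)⟫ := real_inner_comm _ _
    rw [h1]
  calc ∑ i ∈ s, (c i).val (T i)
      = TNData.val H ⟨Fintype.card Idx, ev ∘ σ, fv ∘ σ, heσ, hfσ⟩ := hval
    _ ≤ ⨆ d : TNData G F, d.val H := le_iSup (TNData.val H) _
/-- If `H = W R` is a Hankel-type operator compatible with orthogonal decompositions
`F = ⊕ Fᵢ` and `G = (⊕ 𝔉ᵢ) ⊕ (⊕ 𝔊ᵢ)` (encoded by isometric embeddings with pairwise
orthogonal ranges), then the diagonal blocks `WᵢFᵢ` and `WᵢGᵢ` satisfy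
`∑ᵢ ‖WᵢFᵢ‖_TC ≤ ‖H‖_TC` and `∑ᵢ ‖WᵢGᵢ‖_TC ≤ ‖H‖_TC`. -/
theorem block_trace_norm_sum_le
    {G F : Type*} [NormedAddCommGroup G] [InnerProductSpace ℝ G] [CompleteSpace G]
    [NormedAddCommGroup F] [InnerProductSpace ℝ F] [CompleteSpace F]
    (𝔉 𝔊 Fsp : ℕ → Type*)
    [∀ i, NormedAddCommGroup (𝔉 i)] [∀ i, InnerProductSpace ℝ (𝔉 i)]
    [∀ i, NormedAddCommGroup (𝔊 i)] [∀ i, InnerProductSpace ℝ (𝔊 i)]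
    [∀ i, NormedAddCommGroup (Fsp i)] [∀ i, InnerProductSpace ℝ (Fsp i)]
    (H : G →L[ℝ] F)
    (U : ∀ i, 𝔉 i →ₗᵢ[ℝ] G) (U' : ∀ i, 𝔊 i →ₗᵢ[ℝ] G)
    (V : ∀ i, Fsp i →ₗᵢ[ℝ] F)
    (hU : ∀ i j x y, i ≠ j → ⟪U i x, U j y⟫ = 0)
    (hU' : ∀ i j x y, i ≠ j → ⟪U' i x, U' j y⟫ = 0)
    (hUU' : ∀ i j x y, ⟪U i x, U' j y⟫ = 0)
    (hV : ∀ i j x y, i ≠ j → ⟪V i x, V j y⟫ = 0)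
    (WF : ∀ i, 𝔉 i →L[ℝ] Fsp i) (WG : ∀ i, 𝔊 i →L[ℝ] Fsp i)
    (hWF : ∀ i x y, ⟪(WF i) x, y⟫ = ⟪H ((U i) x), (V i) y⟫)
    (hWG : ∀ i x y, ⟪(WG i) x, y⟫ = ⟪H ((U' i) x), (V i) y⟫) :
    (∑' i, traceNorm (WF i)) ≤ traceNorm H ∧
    (∑' i, traceNorm (WG i)) ≤ traceNorm H :=
  ⟨key_lemma 𝔉 Fsp H U V hU hV WF hWF, key_lemma 𝔊 Fsp H U' V hU' hV WG hWG⟩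
end
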